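/- Let {P_i}_{i∈I} be a family of left S-semimodules and M a left S-semimodule. Then the direct sum ⊕_{i∈I} P_i is M-e-projective if and only if each P_i is M-e-projective. -/

import Mathlib

/-! A retract of an `M`-`e`-projective semimodule is `M`-`e`-projective: lifts and the witnesses
of their essential uniqueness are transported along the section. Each `Pᵢ` is a retract of
`⨁ᵢ Pᵢ`, which gives one direction. Conversely, a linear map out of `⨁ᵢ Pᵢ` is the same as a
family of linear maps out of the `Pᵢ`, compatibly with sums and with postcomposition, so lifts
and witnesses chosen on each summand assemble into ones on the direct sum. -/

universe u

/-- `f` is `k`-normal. -/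
def KNormal {S L M : Type*} [Semiring S] [AddCommMonoid L] [AddCommMonoid M]
    [Module S L] [Module S M] (f : L →ₗ[S] M) : Prop :=
  ∀ l₁ l₂ : L, f l₁ = f l₂ → ∃ k₁ k₂ : L, f k₁ = 0 ∧ f k₂ = 0 ∧ l₁ + k₁ = l₂ + k₂

/-- `P` is `M`-`e`-projective. -/
def MEProjective (S : Type u) [Semiring S] (P : Type u) [AddCommMonoid P]
    [Module S P] (M : Type u) [AddCommMonoid M] [Module S M] : Prop :=
  ∀ (N : Type u) (_ : AddCommMonoid N) (_ : Module S N)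
    (f : M →ₗ[S] N), Function.Surjective f → KNormal f →
    ∀ g : P →ₗ[S] N, ∃ h : P →ₗ[S] M, f.comp h = g ∧
      ∀ h' : P →ₗ[S] M, f.comp h' = g →
        ∃ h₁ h₂ : P →ₗ[S] M, f.comp h₁ = 0 ∧ f.comp h₂ = 0 ∧ h + h₁ = h' + h₂

section Retract

variable {S : Type u} [Semiring S] {P Q M : Type u} [AddCommMonoid P] [Module S P]
  [AddCommMonoid Q] [Module S Q] [AddCommMonoid M] [Module S M]

theorem MEProjective.of_retract (hP : MEProjective S P M) (s : Q →ₗ[S] P) (r : P →ₗ[S] Q)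
    (hrs : r ∘ₗ s = LinearMap.id) : MEProjective S Q M := by
  intro N _ _ f hsurj hnormal g
  obtain ⟨h, hh, hunique⟩ := hP N ‹_› ‹_› f hsurj hnormal (g ∘ₗ r)
  refine ⟨h ∘ₗ s, ?_, fun h' hh' => ?_⟩
  · rw [← LinearMap.comp_assoc, hh, LinearMap.comp_assoc, hrs, LinearMap.comp_id]
  · obtain ⟨h₁, h₂, hh₁, hh₂, hsum⟩ :=
      hunique (h' ∘ₗ r) (by rw [← LinearMap.comp_assoc, hh'])
    refine ⟨h₁ ∘ₗ s, h₂ ∘ₗ s, ?_, ?_, ?_⟩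
    · rw [← LinearMap.comp_assoc, hh₁, LinearMap.zero_comp]
    · rw [← LinearMap.comp_assoc, hh₂, LinearMap.zero_comp]
    · rw [← LinearMap.add_comp, hsum, LinearMap.add_comp, LinearMap.comp_assoc, hrs,
        LinearMap.comp_id]

end Retract

open DirectSum

theorem MEProjective.directSum {S : Type u} [Semiring S] {ι : Type u} [DecidableEq ι]
    {P : ι → Type u} [∀ i, AddCommMonoid (P i)] [∀ i, Module S (P i)]
    {M : Type u} [AddCommMonoid M] [Module S M] (hP : ∀ i, MEProjective S (P i) M) :
    MEProjective S (⨁ i, P i) M := by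
  intro N _ _ f hsurj hnormal g
  choose h hh hunique using fun i => hP i N ‹_› ‹_› f hsurj hnormal (g ∘ₗ lof S ι P i)
  refine ⟨toModule S ι M h, ?_, fun h' hh' => ?_⟩
  · ext i x
    simpa using LinearMap.congr_fun (hh i) x
  · choose h₁ h₂ hh₁ hh₂ hsum using fun i =>
      hunique i (h' ∘ₗ lof S ι P i) (by rw [← LinearMap.comp_assoc, hh'])
    refine ⟨toModule S ι M h₁, toModule S ι M h₂, ?_, ?_, ?_⟩
    · ext i x
      simpa using LinearMap.congr_fun (hh₁ i) x
    · ext i x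
      simpa using LinearMap.congr_fun (hh₂ i) x
    · ext i x
      simpa using LinearMap.congr_fun (hsum i) x

theorem directSum_meProjective_iff_general
    (S : Type u) [Semiring S] {ι : Type u}
    (P : ι → Type u) [∀ i, AddCommMonoid (P i)] [∀ i, Module S (P i)]
    (M : Type u) [AddCommMonoid M] [Module S M] :
    MEProjective S (DirectSum ι P) M ↔ ∀ i : ι, MEProjective S (P i) M := by
  classical
  exact ⟨fun hsum i => hsum.of_retract (lof S ι P i) (component S ι P i)
    (component_comp_lof_same S i), MEProjective.directSum⟩

/-- A direct sum `⊕ᵢ Pᵢ` is `M`-`e`-projective iff every `Pᵢ` is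
`M`-`e`-projective. -/
theorem directSum_meProjective_iff
    (S : Type u) [Semiring S] {ι : Type u} [DecidableEq ι]
    (P : ι → Type u) [∀ i, AddCommMonoid (P i)] [∀ i, Module S (P i)]
    (M : Type u) [AddCommMonoid M] [Module S M] :
    MEProjective S (DirectSum ι P) M ↔ ∀ i : ι, MEProjective S (P i) M :=
  directSum_meProjective_iff_general S P M
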